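/- arXiv:1610.00983 — 6 statements merged into one kernel-verified Lean document; each statement's English description precedes it below -/
import Mathlib

section
/- For the function φ(u,v) = 1/(uv) and the vector fields P(u,v) = (r_x - C_xx·u - C_xy·v + α·v/(β+μ(u+v)))·u and Q(u,v) = (r_y - C_yx·u - C_yy·v - α·u/(β+μ(u+v)))·v, one has ∂_u(φP)(u,v) + ∂_v(φQ)(u,v) = -(C_xx·u + C_yy·v)/(uv) for all u,v > 0; in particular, if C_xx > 0 and C_yy > 0, this expression is strictly negative on the open positive quadrant. -/
/-- Dulac function computation: for φ(u,v) = 1/(uv) and the two-trait HGT vector field,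
∂_u(φP) + ∂_v(φQ) = -(Cxx·u + Cyy·v)/(uv), strictly negative if Cxx, Cyy > 0. -/
theorem dulac_function_identity
    (rx ry Cxx Cxy Cyx Cyy α β μ : ℝ) (hβ : 0 < β) (hμ : 0 ≤ μ)
    (P Q : ℝ → ℝ → ℝ)
    (hP : ∀ u v, P u v = (rx - Cxx * u - Cxy * v + α * v / (β + μ * (u + v))) * u)
    (hQ : ∀ u v, Q u v = (ry - Cyx * u - Cyy * v - α * u / (β + μ * (u + v))) * v)
    (φ : ℝ → ℝ → ℝ) (hφ : ∀ u v, φ u v = 1 / (u * v)) :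
    ∀ u v : ℝ, 0 < u → 0 < v →
      deriv (fun u' => φ u' v * P u' v) u + deriv (fun v' => φ u v' * Q u v') v
        = -(Cxx * u + Cyy * v) / (u * v) ∧
      (0 < Cxx → 0 < Cyy →
        deriv (fun u' => φ u' v * P u' v) u + deriv (fun v' => φ u v' * Q u v') v < 0) := by
  intro u v hu hv
  have hu0 : u ≠ 0 := hu.ne'
  have hv0 : v ≠ 0 := hv.ne'
  have hD : 0 < β + μ * (u + v) := by positivity
  have hD0 : β + μ * (u + v) ≠ 0 := hD.ne'
  -- derivative in u
  have h1 : HasDerivAt (fun u' : ℝ => β + μ * (u' + v)) μ u := by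
    simpa using (((hasDerivAt_id u).add_const v).const_mul μ).const_add β
  have h2 : HasDerivAt (fun u' : ℝ => α * v / (β + μ * (u' + v)))
      ((0 * (β + μ * (u + v)) - α * v * μ) / (β + μ * (u + v)) ^ 2) u :=
    (hasDerivAt_const u (α * v)).div h1 hD0
  have h3 : HasDerivAt
      (fun u' : ℝ => (rx - Cxx * u' - Cxy * v + α * v / (β + μ * (u' + v))) / v)
      ((0 - Cxx * 1 - 0 + (0 * (β + μ * (u + v)) - α * v * μ) / (β + μ * (u + v)) ^ 2) / v)
      u := by
    simpa using ((((hasDerivAt_const u rx).sub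
      ((hasDerivAt_id u).const_mul Cxx)).sub (hasDerivAt_const u (Cxy * v))).add h2).div_const v
  have heq1 : (fun u' : ℝ => φ u' v * P u' v) =ᶠ[nhds u]
      (fun u' : ℝ => (rx - Cxx * u' - Cxy * v + α * v / (β + μ * (u' + v))) / v) := by
    filter_upwards [eventually_gt_nhds hu] with u' hu'
    rw [hφ, hP]
    have hu'0 : u' ≠ 0 := hu'.ne'
    field_simp
  have hd1 : deriv (fun u' : ℝ => φ u' v * P u' v) u
      = (0 - Cxx * 1 - 0 + (0 * (β + μ * (u + v)) - α * v * μ) / (β + μ * (u + v)) ^ 2) / v :=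
    heq1.deriv_eq.trans h3.deriv
  -- derivative in v
  have k1 : HasDerivAt (fun v' : ℝ => β + μ * (u + v')) μ v := by
    simpa using (((hasDerivAt_id v).const_add u).const_mul μ).const_add β
  have k2 : HasDerivAt (fun v' : ℝ => α * u / (β + μ * (u + v')))
      ((0 * (β + μ * (u + v)) - α * u * μ) / (β + μ * (u + v)) ^ 2) v :=
    (hasDerivAt_const v (α * u)).div k1 hD0
  have k3 : HasDerivAt
      (fun v' : ℝ => (ry - Cyx * u - Cyy * v' - α * u / (β + μ * (u + v'))) / u)
      ((0 - 0 - Cyy * 1 - (0 * (β + μ * (u + v)) - α * u * μ) / (β + μ * (u + v)) ^ 2) / u)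
      v := by
    simpa using ((((hasDerivAt_const v ry).sub (hasDerivAt_const v (Cyx * u))).sub
      ((hasDerivAt_id v).const_mul Cyy)).sub k2).div_const u
  have heq2 : (fun v' : ℝ => φ u v' * Q u v') =ᶠ[nhds v]
      (fun v' : ℝ => (ry - Cyx * u - Cyy * v' - α * u / (β + μ * (u + v'))) / u) := by
    filter_upwards [eventually_gt_nhds hv] with v' hv'
    rw [hφ, hQ]
    have hv'0 : v' ≠ 0 := hv'.ne'
    field_simp
  have hd2 : deriv (fun v' : ℝ => φ u v' * Q u v') v
      = (0 - 0 - Cyy * 1 - (0 * (β + μ * (u + v)) - α * u * μ) / (β + μ * (u + v)) ^ 2) / u :=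
    heq2.deriv_eq.trans k3.deriv
  have key : deriv (fun u' : ℝ => φ u' v * P u' v) u + deriv (fun v' : ℝ => φ u v' * Q u v') v
      = -(Cxx * u + Cyy * v) / (u * v) := by
    rw [hd1, hd2]
    field_simp
    ring
  refine ⟨key, fun hCx hCy => ?_⟩
  rw [key]
  have : 0 < Cxx * u + Cyy * v := by positivity
  have huv : 0 < u * v := by positivity
  exact div_neg_of_neg_of_pos (neg_neg_of_pos this) huv
end

section
/- In the two-trait system with constant competition C and β ≠ 0, if f = r_y - r_x < 0 and α < 0, and r_y > 0, β > 0, C > 0, μ ≥ 0, then the candidate polymorphic equilibrium p̂ = -( f·(βC + μ·r_x) + α·r_x )/( μ·f² + α·f ) satisfies p̂ ≥ 1 or p̂ ≤ 0; in fact p̂ < 1 is equivalent to -f·βC < r_y·(μf + α), which fails, so p̂ ≥ 1. -/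
/-- If f = ry - rx < 0 and α < 0, the candidate polymorphic equilibrium frequency
phat = -(f(βC + μ rx) + α rx)/(μ f² + α f) lies outside (0,1): phat < 1 is equivalent to
-f·βC < ry(μf + α), which fails since the left side is positive and the right negative. -/
theorem no_polymorphism_when_f_and_alpha_negative
    (rx ry C α β μ : ℝ) (hrx : 0 < rx) (hry : 0 < ry) (hC : 0 < C)
    (hβ : 0 < β) (hμ : 0 ≤ μ)
    (f : ℝ) (hf : f = ry - rx)
    (hden : μ * f ^ 2 + α * f ≠ 0)
    (phat : ℝ) (hp : phat = -(f * (β * C + μ * rx) + α * rx) / (μ * f ^ 2 + α * f))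
    (hfneg : f < 0) (hα : α < 0) :
    (phat < 1 ↔ -f * (β * C) < ry * (μ * f + α)) ∧
    0 < -f * (β * C) ∧ ry * (μ * f + α) < 0 ∧
    (1 ≤ phat ∨ phat ≤ 0) := by
  have hμf : μ * f ≤ 0 := mul_nonpos_of_nonneg_of_nonpos hμ hfneg.le
  have h1 : μ * f + α < 0 := by linarith
  have hdpos : 0 < μ * f ^ 2 + α * f := by nlinarith
  have key : (μ * f ^ 2 + α * f) - (-(f * (β * C + μ * rx) + α * rx))
      = ry * (μ * f + α) - (-f * (β * C)) := by
    subst hf; ring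
  have hiff : phat < 1 ↔ -f * (β * C) < ry * (μ * f + α) := by
    rw [hp, div_lt_one hdpos]
    constructor <;> intro h <;> linarith
  have h2 : 0 < -f * (β * C) := by nlinarith [mul_pos hβ hC]
  have h3 : ry * (μ * f + α) < 0 := mul_neg_of_pos_of_neg hry h1
  refine ⟨hiff, h2, h3, Or.inl ?_⟩
  by_contra hcon
  push_neg at hcon
  have := hiff.mp hcon
  linarith
end

section
/- At any fixed point (u₀, v₀) with u₀ > 0, v₀ > 0 of the system u' = P(u,v), v' = Q(u,v), where P(u,v) = u·(r_x - C_xx·u - C_xy·v + α·v/(β+μ(u+v))) and Q(u,v) = v·(r_y - C_yx·u - C_yy·v - α·u/(β+μ(u+v))), the trace of the Jacobian matrix equals -C_xx·u₀ - C_yy·v₀, which is strictly negative when C_xx, C_yy > 0. -/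
/-!
Writing `P u v = u · g(u, v)` and `Q u v = v · h(u, v)`, an interior fixed point has
`g = h = 0`, so the diagonal Jacobian entries reduce to `u₀ ∂ᵤg` and `v₀ ∂ᵥh`. The transfer term
`α u v / (β + μ (u + v))` enters `P` and `Q` with opposite signs, so its contributions
`∓ α μ u₀ v₀ / (β + μ (u₀ + v₀))²` to the trace cancel, leaving `-Cxx u₀ - Cyy v₀`.
-/

theorem deriv_mul_self_of_eq_zero {𝕜 : Type*} [NontriviallyNormedField 𝕜] {g : 𝕜 → 𝕜}
    {g' x : 𝕜} (hg : HasDerivAt g g' x) (hx : g x = 0) :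
    deriv (fun y => y * g y) x = x * g' := by
  rw [((hasDerivAt_id' x).fun_mul hg).deriv, hx]
  ring

theorem hasDerivAt_div_affine (c β μ t : ℝ) (ht : β + μ * t ≠ 0) :
    HasDerivAt (fun t => c / (β + μ * t)) (-(c * μ) / (β + μ * t) ^ 2) t := by
  have hden : HasDerivAt (fun t => β + μ * t) μ t := by
    simpa using ((hasDerivAt_id t).const_mul μ).const_add β
  exact ((hasDerivAt_const t c).fun_div hden ht).congr_deriv (by ring)

section GrowthRates

variable (rx ry Cxx Cxy Cyx Cyy α β μ : ℝ) {u v : ℝ}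

theorem hasDerivAt_growthRate_left (hD : β + μ * (u + v) ≠ 0) :
    HasDerivAt (fun u => rx - Cxx * u - Cxy * v + α * v / (β + μ * (u + v)))
      (-Cxx - α * v * μ / (β + μ * (u + v)) ^ 2) u := by
  have hlin : HasDerivAt (fun u => rx - Cxx * u - Cxy * v) (-Cxx) u := by
    simpa using (((hasDerivAt_id u).const_mul Cxx).const_sub rx).sub_const (Cxy * v)
  have htransfer := (hasDerivAt_div_affine (α * v) β μ (u + v) hD).comp_add_const u v
  exact (hlin.fun_add htransfer).congr_deriv (by ring)

theorem hasDerivAt_growthRate_right (hD : β + μ * (u + v) ≠ 0) :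
    HasDerivAt (fun v => ry - Cyx * u - Cyy * v - α * u / (β + μ * (u + v)))
      (-Cyy + α * u * μ / (β + μ * (u + v)) ^ 2) v := by
  have hlin : HasDerivAt (fun v => ry - Cyx * u - Cyy * v) (-Cyy) v := by
    simpa using ((hasDerivAt_id v).const_mul Cyy).const_sub (ry - Cyx * u)
  have htransfer := (hasDerivAt_div_affine (α * u) β μ (u + v) hD).comp_const_add u v
  exact (hlin.fun_sub htransfer).congr_deriv (by ring)

end GrowthRates

/-- At any interior fixed point (u₀,v₀) of the two-trait HGT system, the trace of the
Jacobian equals -Cxx·u₀ - Cyy·v₀ < 0 (when Cxx, Cyy > 0). -/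
theorem trace_jacobian_at_interior_fixed_point
    (rx ry Cxx Cxy Cyx Cyy α β μ : ℝ) (hβ : 0 < β) (hμ : 0 ≤ μ)
    (hCxx : 0 < Cxx) (hCyy : 0 < Cyy)
    (P Q : ℝ → ℝ → ℝ)
    (hP : ∀ u v, P u v = u * (rx - Cxx * u - Cxy * v + α * v / (β + μ * (u + v))))
    (hQ : ∀ u v, Q u v = v * (ry - Cyx * u - Cyy * v - α * u / (β + μ * (u + v))))
    (u₀ v₀ : ℝ) (hu : 0 < u₀) (hv : 0 < v₀)
    (hfix : P u₀ v₀ = 0 ∧ Q u₀ v₀ = 0) :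
    deriv (fun u => P u v₀) u₀ + deriv (fun v => Q u₀ v) v₀ = -Cxx * u₀ - Cyy * v₀ ∧
    deriv (fun u => P u v₀) u₀ + deriv (fun v => Q u₀ v) v₀ < 0 := by
  have hD : β + μ * (u₀ + v₀) ≠ 0 := by positivity
  have hgrowth_x : rx - Cxx * u₀ - Cxy * v₀ + α * v₀ / (β + μ * (u₀ + v₀)) = 0 :=
    (mul_eq_zero.mp (hP u₀ v₀ ▸ hfix.1)).resolve_left hu.ne'
  have hgrowth_y : ry - Cyx * u₀ - Cyy * v₀ - α * u₀ / (β + μ * (u₀ + v₀)) = 0 :=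
    (mul_eq_zero.mp (hQ u₀ v₀ ▸ hfix.2)).resolve_left hv.ne'
  have htrace : deriv (fun u => P u v₀) u₀ + deriv (fun v => Q u₀ v) v₀ =
      -Cxx * u₀ - Cyy * v₀ := by
    simp only [hP, hQ]
    rw [deriv_mul_self_of_eq_zero (hasDerivAt_growthRate_left rx Cxx Cxy α β μ hD) hgrowth_x,
      deriv_mul_self_of_eq_zero (hasDerivAt_growthRate_right ry Cyx Cyy α β μ hD) hgrowth_y]
    ring
  exact ⟨htrace, htrace ▸ by nlinarith⟩
end

section
/- Let n : [0,∞) → ℝ be a nonnegative function satisfying n(t) = n(0) + ∫₀ᵗ g(s)·n(s) ds where g is measurable and r_min - C_max·n(s) ≤ g(s) ≤ r_max - C_min·n(s) with 0 < r_min ≤ r_max and 0 < C_min ≤ C_max. Then for all t, ñ_low(t) ≤ n(t) ≤ ñ_high(t), where ñ_low and ñ_high are the solutions of the logistic equations m' = (r_min - C_max·m)·m and m' = (r_max - C_min·m)·m with initial value n(0). In particular, if n(0) > 0, then n(t) is bounded between positive bounds uniformly for t ≥ t₀ > 0. -/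
/-!
Write `q = g * n`. Wherever `q` is integrable, `n` is continuous and `n t - n s = ∫ₛᵗ q`;
above the level `rmax / Cmin` the integrand is nonpositive, so looking at the last time `n` was
below `max (n 0) (rmax / Cmin)` shows that it never exceeds this level. Hence `q` is bounded, and
it is integrable on every bounded interval: at the supremum `T` of the intervals of integrability
`n` is continuous before `T`, and constant after `T` because there the integral is the junk
value `0`. So `n` is a genuine primitive of `q`.

For the comparison with `nhigh`, let `τ` be the last time before `t` with `w = n - nhigh ≤ 0`.
On `(τ, t]` the logistic bounds give `w' ≤ L w` for a constant `L`, so `W = ∫_τ w` satisfies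
`W' ≤ L W` and `W τ = 0`, and Gronwall forces `W ≤ 0`, which contradicts `w > 0` on `(τ, t]`.
The comparison with `nlow` is symmetric, and the uniform bounds come from the last-time argument
at the levels `rmin / Cmax` and `rmax / Cmin`.
-/

open MeasureTheory intervalIntegral Set Filter

theorem exists_last_le_of_continuousOn {f : ℝ → ℝ} {a b M : ℝ} (hab : a ≤ b)
    (hf : ContinuousOn f (Icc a b)) (ha : f a ≤ M) :
    ∃ τ ∈ Icc a b, f τ ≤ M ∧ ∀ s ∈ Ioc τ b, M < f s := by
  have hclosed : IsClosed (Icc a b ∩ f ⁻¹' Iic M) :=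
    hf.preimage_isClosed_of_isClosed isClosed_Icc isClosed_Iic
  have hbdd : BddAbove (Icc a b ∩ f ⁻¹' Iic M) := ⟨b, fun x hx => hx.1.2⟩
  obtain ⟨hτ, hfτ⟩ := hclosed.csSup_mem ⟨a, left_mem_Icc.2 hab, ha⟩ hbdd
  refine ⟨_, hτ, hfτ, fun s hs => ?_⟩
  by_contra! hle
  exact (le_csSup hbdd ⟨⟨hτ.1.trans hs.1.le, hs.2⟩, hle⟩).not_gt hs.1

theorem nonpos_of_hasDerivAt_le_mul {W W' : ℝ → ℝ} {a b L : ℝ}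
    (hW : ContinuousOn W (Icc a b)) (hW' : ∀ t ∈ Ioo a b, HasDerivAt W (W' t) t)
    (hle : ∀ t ∈ Ioo a b, W' t ≤ L * W t) (ha : W a ≤ 0) :
    ∀ t ∈ Icc a b, W t ≤ 0 := by
  have hanti : AntitoneOn (fun t => Real.exp (-(L * t)) * W t) (Icc a b) := by
    refine antitoneOn_of_hasDerivWithinAt_nonpos (convex_Icc a b)
      ((Real.continuous_exp.comp (continuous_const_mul L).neg).continuousOn.mul hW)
      (f' := fun t => Real.exp (-(L * t)) * (W' t - L * W t)) (fun t ht => ?_) (fun t ht => ?_)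
    · rw [interior_Icc] at ht
      have hexp : HasDerivAt (fun t => Real.exp (-(L * t))) (Real.exp (-(L * t)) * -L) t := by
        simpa using ((hasDerivAt_id t).const_mul L).neg.exp
      exact ((hexp.mul (hW' t ht)).congr_deriv (by ring)).hasDerivWithinAt
    · rw [interior_Icc] at ht
      exact mul_nonpos_of_nonneg_of_nonpos (Real.exp_pos _).le (by linarith [hle t ht])
  intro t ht
  have h := hanti (left_mem_Icc.2 (ht.1.trans ht.2)) ht ht.1
  have : Real.exp (-(L * a)) * W a ≤ 0 := mul_nonpos_of_nonneg_of_nonpos (Real.exp_pos _).le ha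
  exact nonpos_of_mul_nonpos_right (h.trans this) (Real.exp_pos _)

theorem integral_nonpos_of_le_mul_integral {f : ℝ → ℝ} {a b L : ℝ}
    (hf : ContinuousOn f (Icc a b)) (hle : ∀ t ∈ Icc a b, f t ≤ L * ∫ u in a..t, f u) :
    ∀ t ∈ Icc a b, ∫ u in a..t, f u ≤ 0 := by
  intro t ht
  have hft : ContinuousOn f (Icc a t) := hf.mono (Icc_subset_Icc_right ht.2)
  refine nonpos_of_hasDerivAt_le_mul ?_ (fun s hs => ?_)
    (fun s hs => hle s ⟨hs.1.le, hs.2.le.trans ht.2⟩) (by simp) t (right_mem_Icc.2 ht.1)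
  · simpa only [uIcc_of_le ht.1] using
      continuousOn_primitive_interval' (hft.intervalIntegrable_of_Icc ht.1) left_mem_uIcc
  · exact integral_hasDerivAt_right
      ((hft.mono (Icc_subset_Icc_right hs.2.le)).intervalIntegrable_of_Icc hs.1.le)
      ((hft.mono Ioo_subset_Icc_self).stronglyMeasurableAtFilter isOpen_Ioo s hs)
      (hft.continuousAt (Icc_mem_nhds hs.1 hs.2))

theorem IntervalIntegrable.of_mem_Icc {h : ℝ → ℝ} {a b s t : ℝ}
    (hh : IntervalIntegrable h volume a b) (hs : s ∈ Icc a b) (ht : t ∈ Icc a b) :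
    IntervalIntegrable h volume s t :=
  hh.mono_set (uIcc_subset_uIcc (Icc_subset_uIcc hs) (Icc_subset_uIcc ht))

structure IsPrimitiveOn (f h : ℝ → ℝ) (a b : ℝ) : Prop where
  intervalIntegrable : IntervalIntegrable h volume a b
  eq_add_integral : ∀ s ∈ Icc a b, ∀ t ∈ Icc s b, f t = f s + ∫ u in s..t, h u

namespace IsPrimitiveOn

variable {f g h k : ℝ → ℝ} {a b : ℝ}

theorem of_eq_add_integral (hh : IntervalIntegrable h volume a b)
    (hf : ∀ t ∈ Icc a b, f t = f a + ∫ u in a..t, h u) : IsPrimitiveOn f h a b := by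
  refine ⟨hh, fun s hs t ht => ?_⟩
  have ht' : t ∈ Icc a b := ⟨hs.1.trans ht.1, ht.2⟩
  have ha : a ∈ Icc a b := left_mem_Icc.2 (hs.1.trans hs.2)
  rw [hf t ht', hf s hs,
    ← integral_interval_sub_left (hh.of_mem_Icc ha ht') (hh.of_mem_Icc ha hs)]
  ring

theorem continuousOn (hf : IsPrimitiveOn f h a b) : ContinuousOn f (Icc a b) := by
  have hprim : ContinuousOn (fun t => f a + ∫ u in a..t, h u) (Icc a b) :=
    (continuousOn_const.add (continuousOn_primitive_interval' hf.intervalIntegrable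
      left_mem_uIcc)).mono Icc_subset_uIcc
  exact hprim.congr fun t ht => hf.eq_add_integral a (left_mem_Icc.2 (ht.1.trans ht.2)) t ht

theorem sub (hf : IsPrimitiveOn f h a b) (hg : IsPrimitiveOn g k a b) :
    IsPrimitiveOn (f - g) (h - k) a b := by
  refine ⟨hf.intervalIntegrable.sub hg.intervalIntegrable, fun s hs t ht => ?_⟩
  have ht' : t ∈ Icc a b := ⟨hs.1.trans ht.1, ht.2⟩
  simp only [Pi.sub_apply, hf.eq_add_integral s hs t ht, hg.eq_add_integral s hs t ht,
    integral_sub (hf.intervalIntegrable.of_mem_Icc hs ht')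
      (hg.intervalIntegrable.of_mem_Icc hs ht')]
  ring

theorem neg (hf : IsPrimitiveOn f h a b) : IsPrimitiveOn (-f) (-h) a b := by
  refine ⟨hf.intervalIntegrable.neg, fun s hs t ht => ?_⟩
  simp only [Pi.neg_apply, intervalIntegral.integral_neg, hf.eq_add_integral s hs t ht]
  ring

theorem of_hasDerivAt (hf : ∀ t, HasDerivAt f (h t) t) (hh : Continuous h) :
    IsPrimitiveOn f h a b :=
  ⟨hh.intervalIntegrable a b, fun s _ t _ => by
    rw [integral_eq_sub_of_hasDerivAt (fun x _ => hf x) (hh.intervalIntegrable s t)]; ring⟩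

theorem le_max (hf : IsPrimitiveOn f h a b) {M : ℝ}
    (hh : ∀ u ∈ Icc a b, M < f u → h u ≤ 0) :
    ∀ t ∈ Icc a b, f t ≤ max (f a) M := by
  intro t ht
  obtain ⟨τ, hτ, hfτ, habove⟩ := exists_last_le_of_continuousOn ht.1
    (hf.continuousOn.mono (Icc_subset_Icc_right ht.2)) (le_max_left (f a) M)
  have hint : ∫ u in τ..t, h u ≤ 0 := by
    rw [integral_of_le hτ.2]
    exact setIntegral_nonpos measurableSet_Ioc fun u hu =>
      hh u ⟨hτ.1.trans hu.1.le, hu.2.trans ht.2⟩ ((le_max_right _ _).trans_lt (habove u hu))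
  linarith [hf.eq_add_integral τ ⟨hτ.1, hτ.2.trans ht.2⟩ t ⟨hτ.2, ht.2⟩]

theorem nonpos_of_le_mul (hf : IsPrimitiveOn f h a b) (ha : f a ≤ 0) {L : ℝ}
    (hL : ∀ u ∈ Icc a b, 0 < f u → h u ≤ L * f u) : ∀ t ∈ Icc a b, f t ≤ 0 := by
  intro t₁ ht₁
  by_contra! hpos
  obtain ⟨τ, hτ, hfτ, habove⟩ := exists_last_le_of_continuousOn ht₁.1
    (hf.continuousOn.mono (Icc_subset_Icc_right ht₁.2)) ha
  have hτt₁ : τ < t₁ := lt_of_le_of_ne hτ.2 (by rintro rfl; linarith)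
  have hτ' : τ ∈ Icc a b := ⟨hτ.1, hτ.2.trans ht₁.2⟩
  have hsub : Icc τ t₁ ⊆ Icc a b := Icc_subset_Icc hτ.1 ht₁.2
  have hcont : ContinuousOn f (Icc τ t₁) := hf.continuousOn.mono hsub
  have hfW : ∀ t ∈ Icc τ t₁, f t ≤ L * ∫ u in τ..t, f u := by
    intro t ht
    have hfint : IntervalIntegrable f volume τ t :=
      (hcont.mono (Icc_subset_Icc_right ht.2)).intervalIntegrable_of_Icc ht.1
    have hmono : ∫ u in τ..t, h u ≤ ∫ u in τ..t, L * f u := by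
      rw [integral_of_le ht.1, integral_of_le ht.1]
      exact setIntegral_mono_on (hf.intervalIntegrable.of_mem_Icc hτ' (hsub ht)).1
        (hfint.1.const_mul L) measurableSet_Ioc fun u hu =>
          hL u (hsub ⟨hu.1.le, hu.2.trans ht.2⟩) (habove u ⟨hu.1, hu.2.trans ht.2⟩)
    rw [intervalIntegral.integral_const_mul] at hmono
    linarith [hf.eq_add_integral τ hτ' t ⟨ht.1, ht.2.trans ht₁.2⟩]
  have hWnonpos := integral_nonpos_of_le_mul_integral hcont hfW t₁ (right_mem_Icc.2 hτt₁.le)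
  have hWnonneg : 0 ≤ ∫ u in τ..t₁, f u := by
    rw [integral_of_le hτt₁.le]
    exact setIntegral_nonneg measurableSet_Ioc fun u hu => (habove u hu).le
  have := hfW t₁ (right_mem_Icc.2 hτt₁.le)
  rw [le_antisymm hWnonpos hWnonneg, mul_zero] at this
  linarith

theorem min_le (hf : IsPrimitiveOn f h a b) {M : ℝ}
    (hh : ∀ u ∈ Icc a b, f u < M → 0 ≤ h u) :
    ∀ t ∈ Icc a b, min (f a) M ≤ f t := by
  intro t ht
  have := hf.neg.le_max (M := -M)
    (fun u hu hlt => neg_nonpos.2 (hh u hu (neg_lt_neg_iff.1 hlt))) t ht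
  simp only [Pi.neg_apply, max_neg_neg] at this
  linarith

end IsPrimitiveOn

theorem integrableOn_mul_of_eq_add_integral {f g : ℝ → ℝ} {B : ℝ} (hg : Measurable g)
    (hbound : ∀ s, 0 ≤ s → |g s * f s| ≤ B)
    (hsol : ∀ t, 0 ≤ t → f t = f 0 + ∫ s in (0 : ℝ)..t, g s * f s) (T : ℝ) :
    IntegrableOn (fun s => g s * f s) (Ioc 0 T) := by
  set q := fun s => g s * f s
  set G := {T | IntegrableOn q (Ioc 0 T)}
  by_contra hT
  have hbdd : BddAbove G := ⟨T, fun T' hT' => by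
    by_contra! h
    exact hT (hT'.mono_set (Ioc_subset_Ioc_right h.le))⟩
  have h0 : (0 : ℝ) ∈ G := by simp [G]
  set Ts := sSup G
  have hTs0 : 0 ≤ Ts := le_csSup hbdd h0
  have hbounded : ∀ a b, 0 ≤ a → AEStronglyMeasurable q (volume.restrict (Ioc a b)) →
      IntegrableOn q (Ioc a b) := fun a b ha hq =>
    (integrableOn_const measure_Ioc_lt_top.ne).mono' hq
      ((ae_restrict_iff' measurableSet_Ioc).2 (Eventually.of_forall fun s hs =>
        hbound s (ha.trans hs.1.le)))
  have hcont : ContinuousOn f (Ioo 0 Ts) := fun t ht => by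
    obtain ⟨T', hT'G, htT'⟩ := exists_lt_of_lt_csSup ⟨0, h0⟩ ht.2
    have hprim : IsPrimitiveOn f q 0 T' := .of_eq_add_integral
      ((intervalIntegrable_iff_integrableOn_Ioc_of_le (ht.1.trans htT').le).2 hT'G)
      fun t ht => hsol t ht.1
    exact (hprim.continuousOn.continuousAt (Icc_mem_nhds ht.1 htT')).continuousWithinAt
  have hTsG : Ts ∈ G := by
    refine hbounded 0 Ts le_rfl ?_
    rw [Measure.restrict_congr_set Ioo_ae_eq_Ioc.symm]
    exact hg.aestronglyMeasurable.mul (hcont.aestronglyMeasurable measurableSet_Ioo)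
  -- beyond `Ts` the integral in `hsol` is the junk value `0`
  have hconst : ∀ s, Ts < s → f s = f 0 := fun s hs => by
    rw [hsol s (hTs0.trans hs.le), integral_of_le (hTs0.trans hs.le),
      integral_undef fun h => (le_csSup hbdd h).not_gt hs, add_zero]
  have hnext : IntegrableOn q (Ioc Ts (Ts + 1)) := by
    refine hbounded Ts (Ts + 1) hTs0 ((hg.aestronglyMeasurable.mul_const (f 0)).congr ?_)
    exact (ae_restrict_iff' measurableSet_Ioc).2 (Eventually.of_forall fun s hs => by
      simp only [q, hconst s hs.1])
  have hnextG : Ts + 1 ∈ G := by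
    show IntegrableOn q (Ioc 0 (Ts + 1))
    simpa only [Ioc_union_Ioc_eq_Ioc hTs0 (by linarith : Ts ≤ Ts + 1)] using hTsG.union hnext
  linarith [le_csSup hbdd hnextG]

theorem IsPrimitiveOn.le_of_hasDerivAt_logistic {n q m : ℝ → ℝ} {r C a b : ℝ} (hC : 0 ≤ C)
    (hn : IsPrimitiveOn n q a b) (hnpos : ∀ t ∈ Icc a b, 0 ≤ n t)
    (hq : ∀ s ∈ Icc a b, q s ≤ (r - C * n s) * n s)
    (hm : ∀ t, HasDerivAt m ((r - C * m t) * m t) t) (ha : n a ≤ m a) :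
    ∀ t ∈ Icc a b, n t ≤ m t := by
  have hmc : Continuous m := continuous_iff_continuousAt.2 fun t => (hm t).continuousAt
  have hm' : IsPrimitiveOn m (fun t => (r - C * m t) * m t) a b := .of_hasDerivAt hm (by fun_prop)
  obtain ⟨K, hK⟩ := isCompact_Icc.exists_bound_of_continuousOn (hmc.continuousOn (s := Icc a b))
  have hdiff := (hn.sub hm').nonpos_of_le_mul (L := r + C * K) (by simpa using ha)
      fun u hu hw => by
    have hmK : -(n u + m u) ≤ K := by
      linarith [hnpos u hu, neg_abs_le (m u), Real.norm_eq_abs (m u) ▸ hK u hu]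
    simp only [Pi.sub_apply, sub_pos] at hw ⊢
    nlinarith [hq u hu, mul_nonneg (mul_nonneg (sub_nonneg.2 hw.le) hC) (sub_nonneg.2 hmK)]
  exact fun t ht => sub_nonpos.1 (hdiff t ht)

theorem IsPrimitiveOn.ge_of_hasDerivAt_logistic {n q m : ℝ → ℝ} {r C a b : ℝ} (hC : 0 ≤ C)
    (hn : IsPrimitiveOn n q a b) (hnpos : ∀ t ∈ Icc a b, 0 ≤ n t)
    (hq : ∀ s ∈ Icc a b, (r - C * n s) * n s ≤ q s)
    (hm : ∀ t, HasDerivAt m ((r - C * m t) * m t) t) (ha : m a ≤ n a) :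
    ∀ t ∈ Icc a b, m t ≤ n t := by
  have hmc : Continuous m := continuous_iff_continuousAt.2 fun t => (hm t).continuousAt
  have hm' : IsPrimitiveOn m (fun t => (r - C * m t) * m t) a b := .of_hasDerivAt hm (by fun_prop)
  have hdiff := (hm'.sub hn).nonpos_of_le_mul (L := r) (by simpa using ha) fun u hu hw => by
    simp only [Pi.sub_apply, sub_pos] at hw ⊢
    nlinarith [hq u hu, hnpos u hu, mul_nonneg (mul_nonneg (sub_nonneg.2 hw.le) hC)
      (add_nonneg (hnpos u hu) ((hnpos u hu).trans hw.le))]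
  exact fun t ht => sub_nonpos.1 (hdiff t ht)

theorem le_max_div_of_eq_add_integral {n g : ℝ → ℝ} {r C : ℝ} (hC : 0 < C)
    (hnpos : ∀ t, 0 ≤ t → 0 ≤ n t) (hg : ∀ s, 0 ≤ s → g s ≤ r - C * n s)
    (hsol : ∀ t, 0 ≤ t → n t = n 0 + ∫ s in (0 : ℝ)..t, g s * n s) :
    ∀ t, 0 ≤ t → n t ≤ max (n 0) (r / C) := by
  intro t ht
  by_cases hint : IntegrableOn (fun s => g s * n s) (Ioc 0 t)
  · have hprim : IsPrimitiveOn n (fun s => g s * n s) 0 t := .of_eq_add_integral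
      ((intervalIntegrable_iff_integrableOn_Ioc_of_le ht).2 hint) fun s hs => hsol s hs.1
    refine hprim.le_max (fun u hu hnu => ?_) t ⟨ht, le_rfl⟩
    have : r < C * n u := (div_lt_iff₀' hC).1 hnu
    exact mul_nonpos_of_nonpos_of_nonneg (by linarith [hg u hu.1]) (hnpos u hu.1)
  · -- the integral in `hsol` is the junk value `0`
    rw [hsol t ht, integral_of_le ht, integral_undef hint, add_zero]
    exact le_max_left _ _

theorem integrableOn_mul_of_logistic_bounds {rmin rmax Cmin Cmax : ℝ} {n g : ℝ → ℝ}
    (hc : 0 < Cmin) (hcc : Cmin ≤ Cmax) (hnpos : ∀ t, 0 ≤ t → 0 ≤ n t) (hg : Measurable g)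
    (hgbound : ∀ s, 0 ≤ s → rmin - Cmax * n s ≤ g s ∧ g s ≤ rmax - Cmin * n s)
    (hsol : ∀ t, 0 ≤ t → n t = n 0 + ∫ s in (0 : ℝ)..t, g s * n s) (T : ℝ) :
    IntegrableOn (fun s => g s * n s) (Ioc 0 T) := by
  set M := max (n 0) (rmax / Cmin)
  have hM := le_max_div_of_eq_add_integral hc hnpos (fun s hs => (hgbound s hs).2) hsol
  refine integrableOn_mul_of_eq_add_integral (B := (|rmax| + |rmin| + Cmax * M) * M) hg
    (fun s hs => ?_) hsol T
  have hns := hnpos s hs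
  have hgs : |g s| ≤ |rmax| + |rmin| + Cmax * M := by
    have hCmax : 0 ≤ Cmax := hc.le.trans hcc
    have hnM : Cmax * n s ≤ Cmax * M := mul_le_mul_of_nonneg_left (hM s hs) hCmax
    rw [abs_le]
    constructor <;> linarith [(hgbound s hs).1, (hgbound s hs).2, le_abs_self rmax,
      neg_abs_le rmin, abs_nonneg rmax, abs_nonneg rmin, mul_nonneg hc.le hns,
      mul_nonneg hCmax hns]
  rw [abs_mul, abs_of_nonneg hns]
  exact mul_le_mul hgs (hM s hs) hns ((abs_nonneg _).trans hgs)

theorem total_mass_logistic_comparison_general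
    (rmin rmax Cmin Cmax : ℝ)
    (hr : 0 < rmin) (hc : 0 < Cmin) (hcc : Cmin ≤ Cmax)
    (n g : ℝ → ℝ)
    (hnpos : ∀ t, 0 ≤ t → 0 ≤ n t)
    (hg : Measurable g)
    (hgbound : ∀ s, 0 ≤ s → rmin - Cmax * n s ≤ g s ∧ g s ≤ rmax - Cmin * n s)
    (hsol : ∀ t, 0 ≤ t → n t = n 0 + ∫ s in (0:ℝ)..t, g s * n s)
    (nlow nhigh : ℝ → ℝ)
    (hlow0 : nlow 0 = n 0) (hhigh0 : nhigh 0 = n 0)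
    (hlow : ∀ t, HasDerivAt nlow ((rmin - Cmax * nlow t) * nlow t) t)
    (hhigh : ∀ t, HasDerivAt nhigh ((rmax - Cmin * nhigh t) * nhigh t) t) :
    (∀ t, 0 ≤ t → nlow t ≤ n t ∧ n t ≤ nhigh t) ∧
    (0 < n 0 → ∀ t₀ : ℝ, 0 < t₀ →
      ∃ m M : ℝ, 0 < m ∧ ∀ t, t₀ ≤ t → m ≤ n t ∧ n t ≤ M) := by
  have hCmax : 0 < Cmax := hc.trans_le hcc
  have hn : ∀ T, 0 ≤ T → IsPrimitiveOn n (fun s => g s * n s) 0 T := fun T hT =>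
    .of_eq_add_integral ((intervalIntegrable_iff_integrableOn_Ioc_of_le hT).2
      (integrableOn_mul_of_logistic_bounds hc hcc hnpos hg hgbound hsol T)) fun t ht => hsol t ht.1
  have hnpos' : ∀ T, ∀ t ∈ Icc 0 T, 0 ≤ n t := fun _ t ht => hnpos t ht.1
  refine ⟨fun t ht => ⟨?_, ?_⟩, fun hn0 t₀ ht₀ => ?_⟩
  · exact (hn t ht).ge_of_hasDerivAt_logistic hCmax.le (hnpos' t)
      (fun s hs => mul_le_mul_of_nonneg_right (hgbound s hs.1).1 (hnpos s hs.1))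
      hlow hlow0.le t ⟨ht, le_rfl⟩
  · exact (hn t ht).le_of_hasDerivAt_logistic hc.le (hnpos' t)
      (fun s hs => mul_le_mul_of_nonneg_right (hgbound s hs.1).2 (hnpos s hs.1))
      hhigh hhigh0.ge t ⟨ht, le_rfl⟩
  refine ⟨min (n 0) (rmin / Cmax), max (n 0) (rmax / Cmin), lt_min hn0 (div_pos hr hCmax),
    fun t ht => ⟨?_, le_max_div_of_eq_add_integral hc hnpos (fun s hs => (hgbound s hs).2) hsol t
      (ht₀.le.trans ht)⟩⟩
  have ht0 : 0 ≤ t := ht₀.le.trans ht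
  refine (hn t ht0).min_le (fun u hu hlt => mul_nonneg ?_ (hnpos u hu.1)) t ⟨ht0, le_rfl⟩
  linarith [(hgbound u hu.1).1, (lt_div_iff₀' hCmax).1 hlt]

/-- Comparison principle for the total mass: a nonnegative solution of an integral
equation with logistic-type bounds on the growth rate is squeezed between the solutions
of two logistic ODEs; in particular it stays between positive bounds for t ≥ t₀ > 0 if
it starts positive. -/
theorem total_mass_logistic_comparison
    (rmin rmax Cmin Cmax : ℝ)
    (hr : 0 < rmin) (hrr : rmin ≤ rmax) (hc : 0 < Cmin) (hcc : Cmin ≤ Cmax)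
    (n g : ℝ → ℝ)
    (hnpos : ∀ t, 0 ≤ t → 0 ≤ n t)
    (hg : Measurable g)
    (hgbound : ∀ s, 0 ≤ s → rmin - Cmax * n s ≤ g s ∧ g s ≤ rmax - Cmin * n s)
    (hsol : ∀ t, 0 ≤ t → n t = n 0 + ∫ s in (0:ℝ)..t, g s * n s)
    (nlow nhigh : ℝ → ℝ)
    (hlow0 : nlow 0 = n 0) (hhigh0 : nhigh 0 = n 0)
    (hlow : ∀ t, HasDerivAt nlow ((rmin - Cmax * nlow t) * nlow t) t)
    (hhigh : ∀ t, HasDerivAt nhigh ((rmax - Cmin * nhigh t) * nhigh t) t) :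
    (∀ t, 0 ≤ t → nlow t ≤ n t ∧ n t ≤ nhigh t) ∧
    (0 < n 0 → ∀ t₀ : ℝ, 0 < t₀ →
      ∃ m M : ℝ, 0 < m ∧ ∀ t, t₀ ≤ t → m ≤ n t ∧ n t ≤ M) :=
  total_mass_logistic_comparison_general rmin rmax Cmin Cmax hr hc hcc n g hnpos hg hgbound hsol
    nlow nhigh hlow0 hhigh0 hlow hhigh
end

section
/- Suppose ξ¹, ξ² : [0,T] → M_F(𝒳) are two solutions of the limit equation ⟨ξ_t,f⟩ = ⟨ξ_0,f⟩ + ∫₀ᵗ∫(r(x) - C*ξ_s(x))f(x)ξ_s(dx)ds + ∫₀ᵗ∫∫ f(x)·(τ(x,y)-τ(y,x))/(β+μ⟨ξ_s,1⟩)·ξ_s(dy)ξ_s(dx)ds with the same initial condition, with r, C, τ bounded continuous, β > 0, μ ≥ 0, and total masses bounded above by Ā and below by A̲ > 0 on [0,T]. Then there exists a constant K(T) such that ‖ξ¹_t - ξ²_t‖_TV ≤ K(T)·∫₀ᵗ ‖ξ¹_s - ξ²_s‖_TV ds for all t ∈ [0,T], and hence by Gronwall's inequality ξ¹_t = ξ²_t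 for all t ∈ [0,T]. -/
/-!
Test the equation against `f` with `|f| ≤ 1` and subtract: for masses at most `Ā` the drift is
Lipschitz in the measure for the total-variation distance, because `r`, `C`, `τ` are bounded and
the denominator `β + μ⟨ξ, 1⟩` stays above `β`. So `φ t = ‖ξ¹_t - ξ²_t‖_TV` satisfies
`φ t ≤ K ∫₀ᵗ b` whenever `b` is a continuous majorant of `φ` on `[0, T]`, and iterating from
`φ ≤ 2Ā` gives `φ t ≤ 2Ā (K t)ⁿ / n!`, hence `φ = 0`. Only polynomial majorants are ever
integrated, since the measurability of `φ` itself is not known.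

The time integrals in the equation are genuine, not junk: `t ↦ ξ_t(A)` is measurable because, by
the equation, it is `ξ_0(A)` plus the primitive of a bounded function, and such a primitive is
measurable even though it is `0` wherever the integrand fails to be integrable: it is Lipschitz on
the interval where the integrand is integrable and vanishes off it.
-/

open MeasureTheory intervalIntegral

/-- Total variation distance between two finite measures, as the supremum over bounded
measurable test functions `f` with `‖f‖_∞ ≤ 1` of `|∫ f dν₁ - ∫ f dν₂|`. -/
noncomputable def tvDist {𝒳 : Type*} [MeasurableSpace 𝒳] (ν₁ ν₂ : Measure 𝒳) : ℝ :=
  sSup { a : ℝ | ∃ f : 𝒳 → ℝ, Measurable f ∧ (∀ x, |f x| ≤ 1) ∧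
    a = |(∫ x, f x ∂ν₁) - ∫ x, f x ∂ν₂| }

/-- A solution of the limiting transfer equation, tested against all bounded measurable
functions of sup-norm at most 1. -/
def IsSolutionTransferEq {𝒳 : Type*} [MeasurableSpace 𝒳] [TopologicalSpace 𝒳]
    (r : 𝒳 → ℝ) (C : 𝒳 → 𝒳 → ℝ) (τ : 𝒳 → 𝒳 → ℝ) (β μ T : ℝ)
    (ξ : ℝ → Measure 𝒳) : Prop :=
  ∀ f : 𝒳 → ℝ, Measurable f → (∀ x, |f x| ≤ 1) → ∀ t ∈ Set.Icc (0:ℝ) T,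
    (∫ x, f x ∂(ξ t)) = (∫ x, f x ∂(ξ 0))
      + ∫ s in (0:ℝ)..t,
          ((∫ x, (r x - ∫ y, C x y ∂(ξ s)) * f x ∂(ξ s))
            + ∫ x, (f x * (∫ y, (τ x y - τ y x) ∂(ξ s))
                      / (β + μ * ((ξ s) Set.univ).toReal)) ∂(ξ s))

open Set Filter Topology ProbabilityTheory Function

lemma abs_indicator_one_le {X : Type*} (s : Set X) (x : X) : |s.indicator (1 : X → ℝ) x| ≤ 1 := by
  by_cases hx : x ∈ s <;> simp [hx]

section TotalVariation

variable {𝒳 : Type*} [MeasurableSpace 𝒳]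

lemma abs_integral_le_mul_measureReal_univ {ν : Measure 𝒳} [IsFiniteMeasure ν] {g : 𝒳 → ℝ}
    {B : ℝ} (hg : ∀ x, |g x| ≤ B) : |∫ x, g x ∂ν| ≤ B * ν.real univ :=
  norm_integral_le_of_norm_le_const (f := g) (Eventually.of_forall hg)

variable {ν₁ ν₂ : Measure 𝒳}

lemma tvDist_le_of_forall {c : ℝ}
    (h : ∀ f : 𝒳 → ℝ, Measurable f → (∀ x, |f x| ≤ 1) →
      |(∫ x, f x ∂ν₁) - ∫ x, f x ∂ν₂| ≤ c) : tvDist ν₁ ν₂ ≤ c :=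
  csSup_le ⟨0, 0, measurable_const, by simp, by simp⟩ <| by
    rintro a ⟨f, hf, hf1, rfl⟩
    exact h f hf hf1

variable [IsFiniteMeasure ν₁] [IsFiniteMeasure ν₂]

lemma abs_integral_sub_le_tvDist {f : 𝒳 → ℝ} (hf : Measurable f) (hf1 : ∀ x, |f x| ≤ 1) :
    |(∫ x, f x ∂ν₁) - ∫ x, f x ∂ν₂| ≤ tvDist ν₁ ν₂ := by
  refine le_csSup ⟨ν₁.real univ + ν₂.real univ, ?_⟩ ⟨f, hf, hf1, rfl⟩
  rintro a ⟨g, -, hg1, rfl⟩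
  refine (abs_sub _ _).trans (add_le_add ?_ ?_) <;>
    simpa using abs_integral_le_mul_measureReal_univ hg1

lemma tvDist_nonneg : 0 ≤ tvDist ν₁ ν₂ :=
  (abs_nonneg _).trans (abs_integral_sub_le_tvDist (f := 0) measurable_const (by simp))

lemma tvDist_le_measureReal_univ_add : tvDist ν₁ ν₂ ≤ ν₁.real univ + ν₂.real univ :=
  tvDist_le_of_forall fun f _ hf1 => (abs_sub _ _).trans <| add_le_add
    (by simpa using abs_integral_le_mul_measureReal_univ (ν := ν₁) hf1)
    (by simpa using abs_integral_le_mul_measureReal_univ (ν := ν₂) hf1)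

lemma abs_measureReal_univ_sub_le_tvDist : |ν₁.real univ - ν₂.real univ| ≤ tvDist ν₁ ν₂ := by
  simpa using abs_integral_sub_le_tvDist (f := fun _ => 1) measurable_const (by simp)

lemma abs_integral_sub_le_mul_tvDist {g : 𝒳 → ℝ} {B : ℝ} (hB : 0 ≤ B) (hg : Measurable g)
    (hgB : ∀ x, |g x| ≤ B) : |(∫ x, g x ∂ν₁) - ∫ x, g x ∂ν₂| ≤ B * tvDist ν₁ ν₂ := by
  rcases hB.eq_or_lt with rfl | hB
  · simp [fun x => abs_nonpos_iff.mp (hgB x)]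
  have h := abs_integral_sub_le_tvDist (ν₁ := ν₁) (ν₂ := ν₂) (hg.div_const B) fun x => by
    rw [abs_div, abs_of_pos hB]
    exact div_le_one_of_le₀ (hgB x) hB.le
  rwa [MeasureTheory.integral_div, MeasureTheory.integral_div, ← sub_div, abs_div, abs_of_pos hB,
    div_le_iff₀' hB] at h

lemma abs_integral_sub_integral_le {g₁ g₂ : 𝒳 → ℝ} {B D : ℝ} (hB : 0 ≤ B)
    (hg₁ : Measurable g₁) (hg₂ : Measurable g₂) (hg₁B : ∀ x, |g₁ x| ≤ B)
    (hD : ∀ x, |g₁ x - g₂ x| ≤ D) :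
    |(∫ x, g₁ x ∂ν₁) - ∫ x, g₂ x ∂ν₂| ≤ B * tvDist ν₁ ν₂ + D * ν₂.real univ := by
  have hg₂B : ∀ x, |g₂ x| ≤ B + D := fun x => by
    linarith [abs_sub_comm (g₁ x) (g₂ x), abs_sub_abs_le_abs_sub (g₂ x) (g₁ x), hg₁B x, hD x]
  calc |(∫ x, g₁ x ∂ν₁) - ∫ x, g₂ x ∂ν₂|
      ≤ |(∫ x, g₁ x ∂ν₁) - ∫ x, g₁ x ∂ν₂| + |(∫ x, g₁ x ∂ν₂) - ∫ x, g₂ x ∂ν₂| := abs_sub_le _ _ _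
    _ ≤ B * tvDist ν₁ ν₂ + D * ν₂.real univ := by
      rw [← integral_sub (.of_bound hg₁.aestronglyMeasurable B (.of_forall hg₁B))
        (.of_bound hg₂.aestronglyMeasurable (B + D) (.of_forall hg₂B))]
      exact add_le_add (abs_integral_sub_le_mul_tvDist hB hg₁ hg₁B)
        (abs_integral_le_mul_measureReal_univ hD)

lemma eq_of_tvDist_nonpos (h : tvDist ν₁ ν₂ ≤ 0) : ν₁ = ν₂ := by
  ext s hs
  have := (abs_integral_sub_le_tvDist (measurable_one.indicator hs)
    (abs_indicator_one_le s)).trans h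
  rw [integral_indicator_one hs, integral_indicator_one hs, abs_nonpos_iff, sub_eq_zero] at this
  exact (ENNReal.toReal_eq_toReal_iff' (measure_ne_top _ _) (measure_ne_top _ _)).mp this

end TotalVariation

theorem measurable_primitive_of_abs_le {g : ℝ → ℝ} {M : ℝ} (hg : ∀ s, |g s| ≤ M) (a : ℝ) :
    Measurable fun t => ∫ s in a..t, g s := by
  classical
  set S := {t | IntervalIntegrable g volume a t}
  have hS : S.OrdConnected := ⟨fun t₁ h₁ t₂ h₂ t ht => by
    rcases le_total t a with hta | hat
    · exact h₁.mono_set (uIcc_subset_uIcc left_mem_uIcc (mem_uIcc.2 (Or.inr ⟨ht.1, hta⟩)))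
    · exact h₂.mono_set (uIcc_subset_uIcc left_mem_uIcc (mem_uIcc.2 (Or.inl ⟨hat, ht.2⟩)))⟩
  have hM : 0 ≤ M := (abs_nonneg _).trans (hg a)
  have hlip : LipschitzOnWith M.toNNReal (fun t => ∫ s in a..t, g s) S :=
    LipschitzOnWith.of_dist_le_mul fun t ht u hu => by
      rw [Real.dist_eq, Real.dist_eq, integral_interval_sub_left ht hu, Real.coe_toNNReal _ hM]
      exact norm_integral_le_of_norm_le_const (f := g) fun s _ => hg s
  have hpw : (fun t => ∫ s in a..t, g s) = S.piecewise (fun t => ∫ s in a..t, g s) 0 := by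
    ext t
    by_cases ht : t ∈ S
    · simp [ht]
    · simp [ht, integral_undef ht]
  rw [hpw]
  exact hlip.continuousOn.measurable_piecewise continuousOn_const hS.measurableSet

lemma abs_div_sub_div_le {β p₁ p₂ q₁ q₂ : ℝ} (hβ : 0 < β) (h₁ : β ≤ q₁) (h₂ : β ≤ q₂) :
    |p₁ / q₁ - p₂ / q₂| ≤ |p₁ - p₂| / β + |p₂| * |q₁ - q₂| / β ^ 2 := by
  have hq₁ : 0 < q₁ := hβ.trans_le h₁
  have hq₂ : 0 < q₂ := hβ.trans_le h₂
  have key : p₁ / q₁ - p₂ / q₂ = (p₁ - p₂) / q₁ + p₂ * (q₂ - q₁) / (q₁ * q₂) := by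
    field_simp; ring
  rw [key]
  refine (abs_add_le _ _).trans (add_le_add ?_ ?_)
  · rw [abs_div, abs_of_pos hq₁]
    exact div_le_div_of_nonneg_left (abs_nonneg _) hβ h₁
  · rw [abs_div, abs_mul, abs_of_pos (mul_pos hq₁ hq₂), abs_sub_comm q₂ q₁]
    exact div_le_div₀ (by positivity) le_rfl (by positivity) (by nlinarith)

lemma abs_sub_swap_le {X : Type*} {τ : X → X → ℝ} {L : ℝ} (hτL : ∀ x y, |τ x y| ≤ L) (x y : X) :
    |τ x y - τ y x| ≤ 2 * L := by
  linarith [abs_sub (τ x y) (τ y x), hτL x y, hτL y x]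

lemma Measurable.integral_right {α β : Type*} [MeasurableSpace α] [MeasurableSpace β]
    {k : α → β → ℝ} (hk : Measurable (uncurry k)) (ν : Measure β) [SFinite ν] :
    Measurable fun x => ∫ y, k x y ∂ν :=
  (hk.stronglyMeasurable.integral_prod_right' (f := uncurry k)).measurable

lemma Measurable.integral_kernel_right {α β γ : Type*} [MeasurableSpace α] [MeasurableSpace β]
    [MeasurableSpace γ] {k : γ → β → ℝ} (hk : Measurable (uncurry k)) (κ : Kernel α β)
    [IsSFiniteKernel κ] : Measurable fun p : α × γ => ∫ y, k p.2 y ∂κ p.1 :=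
  (StronglyMeasurable.integral_kernel_prod_right (κ := κ.comap Prod.fst measurable_fst)
    (f := fun p y => k p.2 y)
    (hk.comp (measurable_fst.snd.prodMk measurable_snd)).stronglyMeasurable).measurable

section Drift

variable {𝒳 : Type*} [MeasurableSpace 𝒳] {r : 𝒳 → ℝ} {C τ : 𝒳 → 𝒳 → ℝ} {β μ L A : ℝ}

noncomputable def growthTerm (r : 𝒳 → ℝ) (C : 𝒳 → 𝒳 → ℝ) (ν : Measure 𝒳) (f : 𝒳 → ℝ) : ℝ :=
  ∫ x, (r x - ∫ y, C x y ∂ν) * f x ∂ν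

noncomputable def transferTerm (τ : 𝒳 → 𝒳 → ℝ) (β μ : ℝ) (ν : Measure 𝒳) (f : 𝒳 → ℝ) : ℝ :=
  ∫ x, f x * (∫ y, (τ x y - τ y x) ∂ν) / (β + μ * ν.real univ) ∂ν

noncomputable def transferDrift (r : 𝒳 → ℝ) (C τ : 𝒳 → 𝒳 → ℝ) (β μ : ℝ) (ν : Measure 𝒳)
    (f : 𝒳 → ℝ) : ℝ :=
  growthTerm r C ν f + transferTerm τ β μ ν f

lemma Measurable.uncurry_sub_swap (hτ : Measurable (uncurry τ)) :
    Measurable (uncurry fun x y => τ x y - τ y x) :=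
  hτ.sub (hτ.comp measurable_swap)

variable {ν ν₁ ν₂ : Measure 𝒳} {f : 𝒳 → ℝ}

lemma abs_growthIntegrand_le [IsFiniteMeasure ν] (hrL : ∀ x, |r x| ≤ L)
    (hCL : ∀ x y, |C x y| ≤ L) (hν : ν.real univ ≤ A) (hf1 : ∀ x, |f x| ≤ 1) (x : 𝒳) :
    |(r x - ∫ y, C x y ∂ν) * f x| ≤ L + L * A := by
  have hL : 0 ≤ L := (abs_nonneg _).trans (hrL x)
  have hC : |∫ y, C x y ∂ν| ≤ L * A :=
    (abs_integral_le_mul_measureReal_univ (hCL x)).trans (mul_le_mul_of_nonneg_left hν hL)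
  rw [abs_mul]
  calc |r x - ∫ y, C x y ∂ν| * |f x| ≤ |r x - ∫ y, C x y ∂ν| :=
        mul_le_of_le_one_right (abs_nonneg _) (hf1 x)
    _ ≤ L + L * A := (abs_sub _ _).trans (add_le_add (hrL x) hC)

lemma abs_transferIntegrand_le [IsFiniteMeasure ν] (hβ : 0 < β) (hμ : 0 ≤ μ)
    (hτL : ∀ x y, |τ x y| ≤ L) (hν : ν.real univ ≤ A) (hf1 : ∀ x, |f x| ≤ 1) (x : 𝒳) :
    |f x * (∫ y, (τ x y - τ y x) ∂ν) / (β + μ * ν.real univ)| ≤ 2 * L * A / β := by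
  have hL : 0 ≤ L := (abs_nonneg _).trans (hτL x x)
  have hA : 0 ≤ A := measureReal_nonneg.trans hν
  have hq : β ≤ β + μ * ν.real univ := le_add_of_nonneg_right (by positivity)
  have hD : |∫ y, (τ x y - τ y x) ∂ν| ≤ 2 * L * A :=
    (abs_integral_le_mul_measureReal_univ (abs_sub_swap_le hτL x)).trans
      (mul_le_mul_of_nonneg_left hν (by positivity))
  rw [abs_div, abs_of_pos (hβ.trans_le hq), abs_mul]
  exact div_le_div₀ (by positivity)
    ((mul_le_of_le_one_left (abs_nonneg _) (hf1 x)).trans hD) hβ hq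

lemma abs_transferDrift_le [IsFiniteMeasure ν] (hβ : 0 < β) (hμ : 0 ≤ μ) (hL : 0 ≤ L)
    (hrL : ∀ x, |r x| ≤ L) (hCL : ∀ x y, |C x y| ≤ L) (hτL : ∀ x y, |τ x y| ≤ L)
    (hν : ν.real univ ≤ A) (hf1 : ∀ x, |f x| ≤ 1) :
    |transferDrift r C τ β μ ν f| ≤ (L + L * A + 2 * L * A / β) * A := by
  have hA : 0 ≤ A := measureReal_nonneg.trans hν
  calc |transferDrift r C τ β μ ν f|
      ≤ (L + L * A) * ν.real univ + 2 * L * A / β * ν.real univ :=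
        (abs_add_le _ _).trans <| add_le_add
          (abs_integral_le_mul_measureReal_univ (abs_growthIntegrand_le hrL hCL hν hf1))
          (abs_integral_le_mul_measureReal_univ (abs_transferIntegrand_le hβ hμ hτL hν hf1))
    _ ≤ (L + L * A + 2 * L * A / β) * A := by
      rw [← add_mul]
      exact mul_le_mul_of_nonneg_left hν (by positivity)

lemma abs_growthTerm_sub_le [IsFiniteMeasure ν₁] [IsFiniteMeasure ν₂] (hL : 0 ≤ L)
    (hrL : ∀ x, |r x| ≤ L) (hCL : ∀ x y, |C x y| ≤ L) (hr : Measurable r)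
    (hC : Measurable (uncurry C)) (hν₁ : ν₁.real univ ≤ A) (hν₂ : ν₂.real univ ≤ A)
    (hf : Measurable f) (hf1 : ∀ x, |f x| ≤ 1) :
    |growthTerm r C ν₁ f - growthTerm r C ν₂ f| ≤ (L + 2 * L * A) * tvDist ν₁ ν₂ := by
  have hA : 0 ≤ A := measureReal_nonneg.trans hν₁
  have htv : 0 ≤ tvDist ν₁ ν₂ := tvDist_nonneg
  have hdiff : ∀ x, |(r x - ∫ y, C x y ∂ν₁) * f x - (r x - ∫ y, C x y ∂ν₂) * f x|
      ≤ L * tvDist ν₁ ν₂ := fun x => by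
    rw [← sub_mul, sub_sub_sub_cancel_left, abs_mul, abs_sub_comm]
    exact mul_le_of_le_one_right (abs_nonneg _) (hf1 x) |>.trans
      (abs_integral_sub_le_mul_tvDist hL (hC.comp measurable_prodMk_left) (hCL x))
  calc |growthTerm r C ν₁ f - growthTerm r C ν₂ f|
      ≤ (L + L * A) * tvDist ν₁ ν₂ + L * tvDist ν₁ ν₂ * ν₂.real univ :=
        abs_integral_sub_integral_le (by positivity)
          ((hr.sub (hC.integral_right ν₁)).mul hf) ((hr.sub (hC.integral_right ν₂)).mul hf)
          (abs_growthIntegrand_le hrL hCL hν₁ hf1) hdiff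
    _ ≤ (L + L * A) * tvDist ν₁ ν₂ + L * tvDist ν₁ ν₂ * A := by gcongr
    _ = (L + 2 * L * A) * tvDist ν₁ ν₂ := by ring

lemma abs_transferTerm_sub_le [IsFiniteMeasure ν₁] [IsFiniteMeasure ν₂] (hβ : 0 < β)
    (hμ : 0 ≤ μ) (hL : 0 ≤ L) (hτL : ∀ x y, |τ x y| ≤ L) (hτ : Measurable (uncurry τ))
    (hν₁ : ν₁.real univ ≤ A) (hν₂ : ν₂.real univ ≤ A) (hf : Measurable f)
    (hf1 : ∀ x, |f x| ≤ 1) :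
    |transferTerm τ β μ ν₁ f - transferTerm τ β μ ν₂ f|
      ≤ (4 * L * A / β + 2 * L * μ * A ^ 2 / β ^ 2) * tvDist ν₁ ν₂ := by
  have hA : 0 ≤ A := measureReal_nonneg.trans hν₁
  have htv : 0 ≤ tvDist ν₁ ν₂ := tvDist_nonneg
  have hq : ∀ ν : Measure 𝒳, β ≤ β + μ * ν.real univ := fun ν =>
    le_add_of_nonneg_right (by positivity)
  have hdq : |(β + μ * ν₁.real univ) - (β + μ * ν₂.real univ)| ≤ μ * tvDist ν₁ ν₂ := by
    rw [add_sub_add_left_eq_sub, ← mul_sub, abs_mul, abs_of_nonneg hμ]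
    exact mul_le_mul_of_nonneg_left abs_measureReal_univ_sub_le_tvDist hμ
  have hdiff : ∀ x, |f x * (∫ y, (τ x y - τ y x) ∂ν₁) / (β + μ * ν₁.real univ)
      - f x * (∫ y, (τ x y - τ y x) ∂ν₂) / (β + μ * ν₂.real univ)|
      ≤ 2 * L * tvDist ν₁ ν₂ / β + 2 * L * A * (μ * tvDist ν₁ ν₂) / β ^ 2 := fun x => by
    have hD₂ : |∫ y, (τ x y - τ y x) ∂ν₂| ≤ 2 * L * A :=
      (abs_integral_le_mul_measureReal_univ (abs_sub_swap_le hτL x)).trans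
        (mul_le_mul_of_nonneg_left hν₂ (by positivity))
    have hD : |(∫ y, (τ x y - τ y x) ∂ν₁) - ∫ y, (τ x y - τ y x) ∂ν₂| ≤ 2 * L * tvDist ν₁ ν₂ :=
      abs_integral_sub_le_mul_tvDist (by positivity)
        (hτ.uncurry_sub_swap.comp measurable_prodMk_left) (abs_sub_swap_le hτL x)
    rw [mul_div_assoc, mul_div_assoc, ← mul_sub, abs_mul]
    refine (mul_le_of_le_one_left (abs_nonneg _) (hf1 x)).trans
      ((abs_div_sub_div_le hβ (hq ν₁) (hq ν₂)).trans (add_le_add ?_ ?_))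
    · exact div_le_div_of_nonneg_right hD hβ.le
    · exact div_le_div_of_nonneg_right (mul_le_mul hD₂ hdq (abs_nonneg _) (by positivity))
        (by positivity)
  calc |transferTerm τ β μ ν₁ f - transferTerm τ β μ ν₂ f|
      ≤ 2 * L * A / β * tvDist ν₁ ν₂
          + (2 * L * tvDist ν₁ ν₂ / β + 2 * L * A * (μ * tvDist ν₁ ν₂) / β ^ 2) * ν₂.real univ :=
        abs_integral_sub_integral_le (by positivity)
          ((hf.mul (hτ.uncurry_sub_swap.integral_right ν₁)).div_const _)
          ((hf.mul (hτ.uncurry_sub_swap.integral_right ν₂)).div_const _)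
          (abs_transferIntegrand_le hβ hμ hτL hν₁ hf1) hdiff
    _ ≤ 2 * L * A / β * tvDist ν₁ ν₂
          + (2 * L * tvDist ν₁ ν₂ / β + 2 * L * A * (μ * tvDist ν₁ ν₂) / β ^ 2) * A := by
        gcongr
    _ = (4 * L * A / β + 2 * L * μ * A ^ 2 / β ^ 2) * tvDist ν₁ ν₂ := by ring

lemma abs_transferDrift_sub_le [IsFiniteMeasure ν₁] [IsFiniteMeasure ν₂] (hβ : 0 < β)
    (hμ : 0 ≤ μ) (hL : 0 ≤ L) (hrL : ∀ x, |r x| ≤ L) (hCL : ∀ x y, |C x y| ≤ L)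
    (hτL : ∀ x y, |τ x y| ≤ L) (hr : Measurable r) (hC : Measurable (uncurry C))
    (hτ : Measurable (uncurry τ)) (hν₁ : ν₁.real univ ≤ A) (hν₂ : ν₂.real univ ≤ A)
    (hf : Measurable f) (hf1 : ∀ x, |f x| ≤ 1) :
    |transferDrift r C τ β μ ν₁ f - transferDrift r C τ β μ ν₂ f|
      ≤ (L + 2 * L * A + 4 * L * A / β + 2 * L * μ * A ^ 2 / β ^ 2) * tvDist ν₁ ν₂ := by
  calc |transferDrift r C τ β μ ν₁ f - transferDrift r C τ β μ ν₂ f|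
      = |(growthTerm r C ν₁ f - growthTerm r C ν₂ f)
          + (transferTerm τ β μ ν₁ f - transferTerm τ β μ ν₂ f)| := by
        rw [transferDrift, transferDrift, add_sub_add_comm]
    _ ≤ (L + 2 * L * A) * tvDist ν₁ ν₂
          + (4 * L * A / β + 2 * L * μ * A ^ 2 / β ^ 2) * tvDist ν₁ ν₂ :=
        (abs_add_le _ _).trans <| add_le_add (abs_growthTerm_sub_le hL hrL hCL hr hC hν₁ hν₂ hf hf1)
          (abs_transferTerm_sub_le hβ hμ hL hτL hτ hν₁ hν₂ hf hf1)
    _ = (L + 2 * L * A + 4 * L * A / β + 2 * L * μ * A ^ 2 / β ^ 2) * tvDist ν₁ ν₂ := by ring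

lemma measurable_transferDrift {α : Type*} [MeasurableSpace α] (hr : Measurable r)
    (hC : Measurable (uncurry C)) (hτ : Measurable (uncurry τ)) (κ : Kernel α 𝒳)
    [IsSFiniteKernel κ] (hf : Measurable f) :
    Measurable fun s => transferDrift r C τ β μ (κ s) f := by
  have hmass : Measurable fun s => (κ s).real univ :=
    (κ.measurable_coe MeasurableSet.univ).ennreal_toReal
  have hgrowth : Measurable (uncurry fun s x => (r x - ∫ y, C x y ∂κ s) * f x) :=
    ((hr.comp measurable_snd).sub (hC.integral_kernel_right κ)).mul (hf.comp measurable_snd)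
  have htransfer : Measurable (uncurry fun s x =>
      f x * (∫ y, (τ x y - τ y x) ∂κ s) / (β + μ * (κ s).real univ)) :=
    ((hf.comp measurable_snd).mul (hτ.uncurry_sub_swap.integral_kernel_right κ)).div
      (measurable_const.add (measurable_const.mul (hmass.comp measurable_fst)))
  exact (hgrowth.stronglyMeasurable.integral_kernel_prod_right.measurable).add
    htransfer.stronglyMeasurable.integral_kernel_prod_right.measurable

end Drift

namespace IsSolutionTransferEq

variable {𝒳 : Type*} [MeasurableSpace 𝒳] [TopologicalSpace 𝒳] {r : 𝒳 → ℝ} {C τ : 𝒳 → 𝒳 → ℝ}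
  {β μ T L A : ℝ} {ξ ξ₁ ξ₂ : ℝ → Measure 𝒳} {f : 𝒳 → ℝ} {t : ℝ}

theorem integral_eq (hsol : IsSolutionTransferEq r C τ β μ T ξ) (hf : Measurable f)
    (hf1 : ∀ x, |f x| ≤ 1) (ht : t ∈ Icc 0 T) :
    ∫ x, f x ∂ξ t = ∫ x, f x ∂ξ 0 + ∫ s in (0:ℝ)..t, transferDrift r C τ β μ (ξ s) f :=
  hsol f hf hf1 t ht

theorem integral_eq_projIcc (hsol : IsSolutionTransferEq r C τ β μ T ξ) (hT : 0 ≤ T)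
    (hf : Measurable f) (hf1 : ∀ x, |f x| ≤ 1) (ht : t ∈ Icc 0 T) :
    ∫ x, f x ∂ξ t = ∫ x, f x ∂ξ 0
      + ∫ s in (0:ℝ)..t, transferDrift r C τ β μ (ξ (projIcc 0 T hT s)) f := by
  rw [hsol.integral_eq hf hf1 ht]
  congr 1
  refine integral_congr fun s hs => ?_
  rw [uIcc_of_le ht.1] at hs
  rw [projIcc_of_mem hT ⟨hs.1, hs.2.trans ht.2⟩]

-- Clamping time to `[0, T]` makes the drift bounded on all of `ℝ`, as
-- `measurable_primitive_of_abs_le` requires.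
theorem measurable_comp_projIcc (hsol : IsSolutionTransferEq r C τ β μ T ξ) (hT : 0 ≤ T)
    [∀ t, IsFiniteMeasure (ξ t)] (hmass : ∀ t ∈ Icc 0 T, (ξ t).real univ ≤ A) (hβ : 0 < β)
    (hμ : 0 ≤ μ) (hL : 0 ≤ L) (hrL : ∀ x, |r x| ≤ L) (hCL : ∀ x y, |C x y| ≤ L)
    (hτL : ∀ x y, |τ x y| ≤ L) :
    Measurable fun s => ξ (projIcc 0 T hT s) := by
  refine Measure.measurable_of_measurable_coe _ fun s hs => ?_
  have hf : Measurable (s.indicator (1 : 𝒳 → ℝ)) := measurable_one.indicator hs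
  have hf1 := abs_indicator_one_le s
  have hg (u : ℝ) := abs_transferDrift_le hβ hμ hL hrL hCL hτL (hmass _ (projIcc 0 T hT u).2) hf1
  have hreal : Measurable fun u => (ξ (projIcc 0 T hT u)).real s := by
    have heq (u : ℝ) : (ξ (projIcc 0 T hT u)).real s = ∫ x, s.indicator 1 x ∂ξ 0
        + ∫ v in (0:ℝ)..(projIcc 0 T hT u : ℝ),
            transferDrift r C τ β μ (ξ (projIcc 0 T hT v)) (s.indicator 1) := by
      rw [← integral_indicator_one hs, hsol.integral_eq_projIcc hT hf hf1 (projIcc 0 T hT u).2]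
    simp_rw [heq]
    exact measurable_const.add ((measurable_primitive_of_abs_le hg 0).comp
      (continuous_subtype_val.comp continuous_projIcc).measurable)
  simpa [measureReal_def, ENNReal.ofReal_toReal, measure_ne_top] using hreal.ennreal_ofReal

theorem intervalIntegrable_transferDrift (hsol : IsSolutionTransferEq r C τ β μ T ξ)
    (hT : 0 ≤ T) [∀ t, IsFiniteMeasure (ξ t)] (hmass : ∀ t ∈ Icc 0 T, (ξ t).real univ ≤ A)
    (hβ : 0 < β) (hμ : 0 ≤ μ) (hL : 0 ≤ L) (hrL : ∀ x, |r x| ≤ L) (hCL : ∀ x y, |C x y| ≤ L)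
    (hτL : ∀ x y, |τ x y| ≤ L) (hr : Measurable r) (hC : Measurable (uncurry C))
    (hτ : Measurable (uncurry τ)) (hf : Measurable f) (hf1 : ∀ x, |f x| ≤ 1)
    (ht : t ∈ Icc 0 T) :
    IntervalIntegrable (fun s => transferDrift r C τ β μ (ξ s) f) volume 0 t := by
  have hA : 0 ≤ A := measureReal_nonneg.trans (hmass 0 ⟨le_rfl, hT⟩)
  let κ : Kernel ℝ 𝒳 :=
    ⟨fun s => ξ (projIcc 0 T hT s), hsol.measurable_comp_projIcc hT hmass hβ hμ hL hrL hCL hτL⟩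
  have hκ (s : ℝ) : (κ s).real univ ≤ A := hmass _ (projIcc 0 T hT s).2
  have : IsFiniteKernel κ := ⟨⟨ENNReal.ofReal A, ENNReal.ofReal_lt_top, fun s =>
    (ENNReal.le_ofReal_iff_toReal_le (measure_ne_top _ _) hA).mpr (hκ s)⟩⟩
  have hκint : IntervalIntegrable (fun s => transferDrift r C τ β μ (κ s) f) volume 0 t :=
    intervalIntegrable_const.mono_fun' (measurable_transferDrift hr hC hτ κ hf).aestronglyMeasurable
      (ae_of_all _ fun s => abs_transferDrift_le hβ hμ hL hrL hCL hτL (hκ s) hf1)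
  refine hκint.congr_ae ((ae_restrict_mem measurableSet_uIoc).mono fun s hs => ?_)
  rw [uIoc_of_le ht.1] at hs
  simp [κ, projIcc_of_mem hT ⟨hs.1.le, hs.2.trans ht.2⟩]

theorem tvDist_le_mul_integral (hsol₁ : IsSolutionTransferEq r C τ β μ T ξ₁)
    (hsol₂ : IsSolutionTransferEq r C τ β μ T ξ₂) (hinit : ξ₁ 0 = ξ₂ 0) (hT : 0 ≤ T)
    [∀ t, IsFiniteMeasure (ξ₁ t)] [∀ t, IsFiniteMeasure (ξ₂ t)]
    (hmass₁ : ∀ t ∈ Icc 0 T, (ξ₁ t).real univ ≤ A) (hmass₂ : ∀ t ∈ Icc 0 T, (ξ₂ t).real univ ≤ A)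
    (hβ : 0 < β) (hμ : 0 ≤ μ) (hL : 0 ≤ L) (hrL : ∀ x, |r x| ≤ L) (hCL : ∀ x y, |C x y| ≤ L)
    (hτL : ∀ x y, |τ x y| ≤ L) (hr : Measurable r) (hC : Measurable (uncurry C))
    (hτ : Measurable (uncurry τ)) :
    ∀ b : ℝ → ℝ, Continuous b → (∀ s ∈ Icc 0 T, tvDist (ξ₁ s) (ξ₂ s) ≤ b s) →
      ∀ t ∈ Icc 0 T, tvDist (ξ₁ t) (ξ₂ t)
        ≤ (L + 2 * L * A + 4 * L * A / β + 2 * L * μ * A ^ 2 / β ^ 2) * ∫ s in (0:ℝ)..t, b s := by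
  intro b hb hφb t ht
  set K := L + 2 * L * A + 4 * L * A / β + 2 * L * μ * A ^ 2 / β ^ 2
  have hK : 0 ≤ K := by
    have hA : 0 ≤ A := measureReal_nonneg.trans (hmass₁ 0 ⟨le_rfl, hT⟩)
    positivity
  refine tvDist_le_of_forall fun f hf hf1 => ?_
  rw [hsol₁.integral_eq hf hf1 ht, hsol₂.integral_eq hf hf1 ht, hinit, add_sub_add_left_eq_sub,
    ← integral_sub (hsol₁.intervalIntegrable_transferDrift hT hmass₁ hβ hμ hL hrL hCL hτL hr hC hτ
      hf hf1 ht) (hsol₂.intervalIntegrable_transferDrift hT hmass₂ hβ hμ hL hrL hCL hτL hr hC hτ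
      hf hf1 ht), ← intervalIntegral.integral_const_mul, ← Real.norm_eq_abs]
  refine norm_integral_le_of_norm_le ht.1 (ae_of_all _ fun s hs => ?_)
    ((hb.const_mul K).intervalIntegrable 0 t)
  have hs' : s ∈ Icc 0 T := ⟨hs.1.le, hs.2.trans ht.2⟩
  exact (abs_transferDrift_sub_le hβ hμ hL hrL hCL hτL hr hC hτ (hmass₁ s hs') (hmass₂ s hs') hf
    hf1).trans (mul_le_mul_of_nonneg_left (hφb s hs') hK)

end IsSolutionTransferEq

theorem nonpos_of_le_mul_integral {φ : ℝ → ℝ} {B K T : ℝ} (hB : ∀ t ∈ Icc 0 T, φ t ≤ B)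
    (hK : ∀ b : ℝ → ℝ, Continuous b → (∀ s ∈ Icc 0 T, φ s ≤ b s) →
      ∀ t ∈ Icc 0 T, φ t ≤ K * ∫ s in (0:ℝ)..t, b s)
    {t : ℝ} (ht : t ∈ Icc 0 T) : φ t ≤ 0 := by
  have hiter (n : ℕ) : ∀ t ∈ Icc 0 T, φ t ≤ B * (K * t) ^ n / n.factorial := by
    induction n with
    | zero => simpa using hB
    | succ n ih =>
      intro t ht
      convert hK _ (by fun_prop) ih t ht using 1
      have hmono (s : ℝ) : B * (K * s) ^ n / n.factorial = B * K ^ n / n.factorial * s ^ n := by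
        ring
      simp_rw [hmono]
      rw [intervalIntegral.integral_const_mul, integral_pow, Nat.factorial_succ]
      push_cast
      field_simp
      ring
  have hlim : Tendsto (fun n : ℕ => B * (K * t) ^ n / n.factorial) atTop (𝓝 0) := by
    simpa [mul_div_assoc] using (FloorSemiring.tendsto_pow_div_factorial_atTop (K * t)).const_mul B
  exact ge_of_tendsto' hlim fun n => hiter n t ht

lemma exists_nonneg_abs_le_of_continuous {X : Type*} [TopologicalSpace X] [CompactSpace X]
    {g : X → ℝ} (hg : Continuous g) : ∃ M, 0 ≤ M ∧ ∀ x, |g x| ≤ M :=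
  ⟨‖BoundedContinuousFunction.mkOfCompact ⟨g, hg⟩‖, norm_nonneg _,
    (BoundedContinuousFunction.mkOfCompact ⟨g, hg⟩).norm_coe_le_norm⟩

theorem uniqueness_limit_equation_general
    {𝒳 : Type*} [MeasurableSpace 𝒳] [MetricSpace 𝒳] [CompactSpace 𝒳] [BorelSpace 𝒳]
    (r : 𝒳 → ℝ) (C τ : 𝒳 → 𝒳 → ℝ)
    (hr : Continuous r) (hC : Continuous (Function.uncurry C))
    (hτ : Continuous (Function.uncurry τ))
    (β μ T Abar Alow : ℝ) (hβ : 0 < β) (hμ : 0 ≤ μ) (hT : 0 < T)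
    (ξ₁ ξ₂ : ℝ → Measure 𝒳)
    (hfin₁ : ∀ t, IsFiniteMeasure (ξ₁ t)) (hfin₂ : ∀ t, IsFiniteMeasure (ξ₂ t))
    (hmass : ∀ t ∈ Set.Icc (0:ℝ) T,
      Alow ≤ ((ξ₁ t) Set.univ).toReal ∧ ((ξ₁ t) Set.univ).toReal ≤ Abar ∧
      Alow ≤ ((ξ₂ t) Set.univ).toReal ∧ ((ξ₂ t) Set.univ).toReal ≤ Abar)
    (hsol₁ : IsSolutionTransferEq r C τ β μ T ξ₁)
    (hsol₂ : IsSolutionTransferEq r C τ β μ T ξ₂)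
    (hinit : ξ₁ 0 = ξ₂ 0) :
    (∃ K : ℝ, 0 < K ∧ ∀ t ∈ Set.Icc (0:ℝ) T,
      tvDist (ξ₁ t) (ξ₂ t) ≤ K * ∫ s in (0:ℝ)..t, tvDist (ξ₁ s) (ξ₂ s)) ∧
    ∀ t ∈ Set.Icc (0:ℝ) T, ξ₁ t = ξ₂ t := by
  obtain ⟨Lr, hLr, hrL⟩ := exists_nonneg_abs_le_of_continuous hr
  obtain ⟨LC, -, hCL⟩ := exists_nonneg_abs_le_of_continuous hC
  obtain ⟨Lτ, -, hτL⟩ := exists_nonneg_abs_le_of_continuous hτ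
  have hmass₁ (t : ℝ) (ht : t ∈ Icc 0 T) : (ξ₁ t).real univ ≤ Abar := (hmass t ht).2.1
  have hmass₂ (t : ℝ) (ht : t ∈ Icc 0 T) : (ξ₂ t).real univ ≤ Abar := (hmass t ht).2.2.2
  have hgronwall := hsol₁.tvDist_le_mul_integral (L := max Lr (max LC Lτ)) hsol₂ hinit hT.le
    hmass₁ hmass₂ hβ hμ (hLr.trans (le_max_left _ _)) (fun x => (hrL x).trans (le_max_left _ _))
    (fun x y => (hCL (x, y)).trans ((le_max_left _ _).trans (le_max_right _ _)))
    (fun x y => (hτL (x, y)).trans ((le_max_right _ _).trans (le_max_right _ _)))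
    hr.measurable hC.measurable hτ.measurable
  have htv (t : ℝ) (ht : t ∈ Icc 0 T) : tvDist (ξ₁ t) (ξ₂ t) = 0 :=
    le_antisymm (nonpos_of_le_mul_integral (B := 2 * Abar) (fun s hs => by
        linarith [tvDist_le_measureReal_univ_add (ν₁ := ξ₁ s) (ν₂ := ξ₂ s), hmass₁ s hs,
          hmass₂ s hs])
      hgronwall ht) tvDist_nonneg
  refine ⟨⟨1, one_pos, fun t ht => ?_⟩, fun t ht => eq_of_tvDist_nonpos (htv t ht).le⟩
  rw [htv t ht, integral_congr (g := 0) fun s hs => htv s ?_]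
  · simp
  · rw [uIcc_of_le ht.1] at hs
    exact ⟨hs.1, hs.2.trans ht.2⟩

/-- Uniqueness for the limiting integro-differential equation: two solutions with the
same initial condition and total masses bounded above and below on [0,T] satisfy a
Gronwall-type inequality in total variation, hence coincide on [0,T]. -/
theorem uniqueness_limit_equation
    {𝒳 : Type*} [MeasurableSpace 𝒳] [MetricSpace 𝒳] [CompactSpace 𝒳] [BorelSpace 𝒳]
    (r : 𝒳 → ℝ) (C τ : 𝒳 → 𝒳 → ℝ)
    (hr : Continuous r) (hC : Continuous (Function.uncurry C))
    (hτ : Continuous (Function.uncurry τ))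
    (β μ T Abar Alow : ℝ) (hβ : 0 < β) (hμ : 0 ≤ μ) (hT : 0 < T) (hA : 0 < Alow)
    (ξ₁ ξ₂ : ℝ → Measure 𝒳)
    (hfin₁ : ∀ t, IsFiniteMeasure (ξ₁ t)) (hfin₂ : ∀ t, IsFiniteMeasure (ξ₂ t))
    (hmass : ∀ t ∈ Set.Icc (0:ℝ) T,
      Alow ≤ ((ξ₁ t) Set.univ).toReal ∧ ((ξ₁ t) Set.univ).toReal ≤ Abar ∧
      Alow ≤ ((ξ₂ t) Set.univ).toReal ∧ ((ξ₂ t) Set.univ).toReal ≤ Abar)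
    (hsol₁ : IsSolutionTransferEq r C τ β μ T ξ₁)
    (hsol₂ : IsSolutionTransferEq r C τ β μ T ξ₂)
    (hinit : ξ₁ 0 = ξ₂ 0) :
    (∃ K : ℝ, 0 < K ∧ ∀ t ∈ Set.Icc (0:ℝ) T,
      tvDist (ξ₁ t) (ξ₂ t) ≤ K * ∫ s in (0:ℝ)..t, tvDist (ξ₁ s) (ξ₂ s)) ∧
    ∀ t ∈ Set.Icc (0:ℝ) T, ξ₁ t = ξ₂ t :=
  uniqueness_limit_equation_general r C τ hr hC hτ β μ T Abar Alow hβ hμ hT ξ₁ ξ₂ hfin₁ hfin₂ hmass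
    hsol₁ hsol₂ hinit
end

section
/- Let b, d be positive reals with d > b, and for η, K define T(η,K) = (1/b)·Σ_{j≥1} (b/d)^j · Σ_{k=1}^{⌊ηK⌋-1} 1/(k+j), the expected extinction time of a subcritical linear birth-death process started from ⌊ηK⌋ individuals. Then T(η,K)/log K → 1/(d-b) as K → ∞. -/
/-!
Write `r = b / d` and `n = ⌊ηK⌋`. The inner sum is `H (n + j) - H (j + 1)` in harmonic numbers,
so it lies between `log n - H (j + 1)` and `log n`: divided by `log n` it tends to `1` for each
`j` and stays below `1`. Tannery's theorem then gives `∑ r ^ (j + 1) · (inner sum) / log n →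
r / (1 - r)`, and `log ⌊ηK⌋ / log K → 1` turns this into
`T / log K → r / (b (1 - r)) = 1 / (d - b)`.
-/

open Filter Topology Finset Real

lemma tendsto_log_natCast_atTop : Tendsto (fun n : ℕ => Real.log n) atTop atTop :=
  Real.tendsto_log_atTop.comp tendsto_natCast_atTop_atTop

lemma sum_Icc_one_div_add_eq_harmonic_sub (n j : ℕ) :
    ∑ k ∈ Icc 1 n, (1 : ℝ) / ((k : ℝ) + (j + 1)) = harmonic (n + j + 1) - harmonic (j + 1) := by
  induction n with
  | zero => simp
  | succ n ih =>
    rw [sum_Icc_succ_top (by omega), ih, show n + 1 + j + 1 = n + j + 1 + 1 by ring,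
      harmonic_succ (n + j + 1)]
    push_cast
    ring

lemma sum_Icc_one_div_add_le_log (n j : ℕ) :
    ∑ k ∈ Icc 1 (n - 1), (1 : ℝ) / ((k : ℝ) + (j + 1)) ≤ Real.log n := by
  rcases n with _ | m
  · simp
  calc ∑ k ∈ Icc 1 (m + 1 - 1), (1 : ℝ) / ((k : ℝ) + (j + 1))
      ≤ ∑ k ∈ Icc 1 m, (1 : ℝ) / ((k : ℝ) + ((0 : ℕ) + 1)) := by
        rw [Nat.add_sub_cancel]
        gcongr
        simp
    _ = harmonic (m + 1) - 1 := by rw [sum_Icc_one_div_add_eq_harmonic_sub]; simp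
    _ ≤ Real.log (m + 1 : ℕ) := by linarith [harmonic_le_one_add_log (m + 1)]

lemma log_sub_harmonic_le_sum_Icc_one_div_add (n j : ℕ) :
    Real.log n - harmonic (j + 1) ≤ ∑ k ∈ Icc 1 (n - 1), (1 : ℝ) / ((k : ℝ) + (j + 1)) := by
  rcases n with _ | m
  · have h : (0 : ℝ) ≤ harmonic (j + 1) := by exact_mod_cast (harmonic_pos j.succ_ne_zero).le
    rw [Nat.cast_zero, Real.log_zero, zero_sub]
    exact (neg_nonpos.2 h).trans (sum_nonneg fun k _ => by positivity)
  rw [Nat.add_sub_cancel, sum_Icc_one_div_add_eq_harmonic_sub]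
  have h_log_le : Real.log (m + 1 : ℕ) ≤ Real.log (m + j + 1 + 1 : ℕ) :=
    Real.log_le_log (by positivity) (by gcongr; omega)
  linarith [log_add_one_le_harmonic (m + j + 1)]

lemma tendsto_sum_Icc_one_div_add_div_log (j : ℕ) :
    Tendsto (fun n : ℕ => (∑ k ∈ Icc 1 (n - 1), (1 : ℝ) / ((k : ℝ) + (j + 1))) / Real.log n)
      atTop (𝓝 1) := by
  have h_lower :
      Tendsto (fun n : ℕ => 1 - (harmonic (j + 1) : ℝ) / Real.log n) atTop (𝓝 1) := by
    simpa using tendsto_const_nhds.sub (tendsto_const_nhds.div_atTop tendsto_log_natCast_atTop)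
  refine tendsto_of_tendsto_of_tendsto_of_le_of_le' h_lower tendsto_const_nhds ?_ ?_
  all_goals filter_upwards [tendsto_log_natCast_atTop.eventually_gt_atTop 0] with n hn
  · rw [one_sub_div hn.ne']
    exact div_le_div_of_nonneg_right (log_sub_harmonic_le_sum_Icc_one_div_add n j) hn.le
  · exact div_le_one_of_le₀ (sum_Icc_one_div_add_le_log n j) hn.le

lemma tsum_pow_succ {r : ℝ} (hr₀ : 0 ≤ r) (hr₁ : r < 1) :
    ∑' j : ℕ, r ^ (j + 1) = r / (1 - r) := by
  simp_rw [pow_succ', tsum_mul_left, tsum_geometric_of_lt_one hr₀ hr₁, div_eq_mul_inv]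

lemma tendsto_tsum_pow_mul_sum_Icc_one_div_add_div_log {r : ℝ} (hr₀ : 0 ≤ r) (hr₁ : r < 1) :
    Tendsto (fun n : ℕ => (∑' j : ℕ, r ^ (j + 1) *
        ∑ k ∈ Icc 1 (n - 1), (1 : ℝ) / ((k : ℝ) + (j + 1))) / Real.log n)
      atTop (𝓝 (r / (1 - r))) := by
  simp_rw [← tsum_div_const, mul_div_assoc, ← tsum_pow_succ hr₀ hr₁]
  refine tendsto_tsum_of_dominated_convergence (bound := fun j => r ^ (j + 1))
    ((summable_geometric_of_lt_one hr₀ hr₁).mul_left r |>.congr fun j => (pow_succ' r j).symm)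
    (fun j => by simpa using (tendsto_sum_Icc_one_div_add_div_log j).const_mul (r ^ (j + 1))) ?_
  filter_upwards [tendsto_log_natCast_atTop.eventually_gt_atTop 0] with n hn j
  rw [norm_mul, norm_of_nonneg (by positivity), norm_of_nonneg (by positivity)]
  exact mul_le_of_le_one_right (by positivity)
    (div_le_one_of_le₀ (sum_Icc_one_div_add_le_log n j) hn.le)

lemma tendsto_log_div_log_of_tendsto_div {α : Type*} {l : Filter α} {u v : α → ℝ} {c : ℝ}
    (hv : Tendsto v l atTop) (huv : Tendsto (fun x => u x / v x) l (𝓝 c)) (hc : 0 < c) :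
    Tendsto (fun x => Real.log (u x) / Real.log (v x)) l (𝓝 1) := by
  have h_log_v : Tendsto (fun x => Real.log (v x)) l atTop := Real.tendsto_log_atTop.comp hv
  have h_lim : Tendsto (fun x => Real.log (u x / v x) / Real.log (v x) + 1) l (𝓝 1) := by
    simpa using ((huv.log hc.ne').div_atTop h_log_v).add_const 1
  refine h_lim.congr' ?_
  filter_upwards [hv.eventually_gt_atTop 0, huv.eventually_const_lt hc,
    h_log_v.eventually_gt_atTop 0] with x hv_pos hu_pos hlog_pos
  rw [Real.log_div ((div_pos_iff_of_pos_right hv_pos).1 hu_pos).ne' hv_pos.ne', sub_div,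
    div_self hlog_pos.ne']
  ring

/-- The expected extinction time of a subcritical linear birth-death process (rates b < d)
started from ⌊ηK⌋ individuals, T(η,K) = (1/b) Σ_{j≥1} (b/d)^j Σ_{k=1}^{⌊ηK⌋-1} 1/(k+j),
satisfies T(η,K)/log K → 1/(d-b) as K → ∞. -/
theorem extinction_time_log_asymptotics
    (b d η : ℝ) (hb : 0 < b) (hbd : b < d) (hη : 0 < η) :
    Tendsto
      (fun K : ℕ =>
        ((1 / b) * ∑' j : ℕ,
            (b / d) ^ (j + 1) *
              ∑ k ∈ Finset.Icc 1 (⌊η * (K : ℝ)⌋₊ - 1), (1 : ℝ) / ((k : ℝ) + (j + 1)))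
          / Real.log K)
      atTop (nhds (1 / (d - b))) := by
  have hd : 0 < d := hb.trans hbd
  have h_floor : Tendsto (fun K : ℕ => ⌊η * (K : ℝ)⌋₊) atTop atTop :=
    tendsto_nat_floor_mul_atTop η hη
  have h_tsum := (tendsto_tsum_pow_mul_sum_Icc_one_div_add_div_log (div_nonneg hb.le hd.le)
    ((div_lt_one hd).2 hbd)).comp h_floor
  have h_log_ratio : Tendsto (fun K : ℕ => Real.log ⌊η * (K : ℝ)⌋₊ / Real.log K) atTop (𝓝 1) :=
    tendsto_log_div_log_of_tendsto_div tendsto_natCast_atTop_atTop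
      ((tendsto_nat_floor_mul_div_atTop hη.le).comp tendsto_natCast_atTop_atTop) hη
  have h_limit : 1 / b * (b / d / (1 - b / d)) * 1 = 1 / (d - b) := by
    field_simp
  rw [← h_limit]
  refine ((h_tsum.const_mul (1 / b)).mul h_log_ratio).congr' ?_
  filter_upwards [(tendsto_log_natCast_atTop.comp h_floor).eventually_gt_atTop 0] with K hK
  simp only [Function.comp_apply] at hK ⊢
  field_simp
end
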